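/- arXiv:1808.01299 — 8 statements merged into one kernel-verified Lean document; each statement's English description precedes it below -/
import Mathlib

section
/- Let I = ℝ or I = [0,∞), let X be a complex Banach space, and let f : I → X be continuous. If f is almost anti-periodic (i.e., for each ε > 0 the set of ε-antiperiods of f is relatively dense in I), then f is almost periodic, i.e., for each ε > 0 the set of ε-periods of f is relatively dense in I. -/
/-- A set `S` of (positive) real numbers is relatively dense: there is `l > 0`
such that every interval of length `l` (within the positive half-line) meets `S`. -/
def RelativelyDense (S : Set ℝ) : Prop :=
  ∃ l > 0, ∀ a : ℝ, 0 ≤ a → ∃ τ ∈ S, a ≤ τ ∧ τ ≤ a + l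

/-- `f` is almost anti-periodic on `I`: for each `ε > 0` the set of
`ε`-antiperiods of `f` is relatively dense. -/
def AlmostAntiPeriodicOn {X : Type*} [NormedAddCommGroup X] (I : Set ℝ) (f : ℝ → X) : Prop :=
  ∀ ε > 0, RelativelyDense {τ : ℝ | 0 < τ ∧ ∀ t ∈ I, ‖f (t + τ) + f t‖ ≤ ε}

/-- `f` is almost periodic on `I`: for each `ε > 0` the set of
`ε`-periods of `f` is relatively dense. -/
def AlmostPeriodicOn {X : Type*} [NormedAddCommGroup X] (I : Set ℝ) (f : ℝ → X) : Prop :=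
  ∀ ε > 0, RelativelyDense {τ : ℝ | 0 < τ ∧ ∀ t ∈ I, ‖f (t + τ) - f t‖ ≤ ε}

/-- Every almost anti-periodic function is almost periodic. -/
theorem almostAntiPeriodic_almostPeriodic
    {X : Type*} [NormedAddCommGroup X] [NormedSpace ℂ X] [CompleteSpace X]
    (I : Set ℝ) (hI : I = Set.univ ∨ I = Set.Ici (0 : ℝ))
    (f : ℝ → X) (hf : ContinuousOn f I)
    (h : AlmostAntiPeriodicOn I f) : AlmostPeriodicOn I f := by
  intro ε hε
  obtain ⟨l, hl, H⟩ := h (ε / 2) (by linarith)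
  refine ⟨2 * l, by linarith, fun a ha => ?_⟩
  obtain ⟨τ, ⟨hτpos, hτ⟩, h1, h2⟩ := H (a / 2) (by linarith)
  refine ⟨2 * τ, ⟨by linarith, fun t ht => ?_⟩, by linarith, by linarith⟩
  have htτ : t + τ ∈ I := by
    rcases hI with rfl | rfl
    · trivial
    · have : (0 : ℝ) ≤ t := ht
      show (0:ℝ) ≤ t + τ
      linarith
  have e1 := hτ (t + τ) htτ
  have e2 := hτ t ht
  have : f (t + 2 * τ) - f t = (f (t + τ + τ) + f (t + τ)) - (f (t + τ) + f t) := by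
    ring_nf
    abel_nf
  calc ‖f (t + 2 * τ) - f t‖ = ‖(f (t + τ + τ) + f (t + τ)) - (f (t + τ) + f t)‖ := by rw [this]
    _ ≤ ‖f (t + τ + τ) + f (t + τ)‖ + ‖f (t + τ) + f t‖ := norm_sub_le _ _
    _ ≤ ε / 2 + ε / 2 := add_le_add e1 e2
    _ = ε := by ring
end

section
/- The function f : ℝ → ℂ defined by f(t) = sin(πt) + sin(πt√2) is almost anti-periodic but is not periodic (there is no ω > 0 with f(t+ω) = f(t) for all t ∈ ℝ). -/
/-- `f : ℝ → X` is almost anti-periodic. -/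
def AlmostAntiPeriodic {X : Type*} [NormedAddCommGroup X] (f : ℝ → X) : Prop :=
  ∀ ε > 0, RelativelyDense {τ : ℝ | 0 < τ ∧ ∀ t : ℝ, ‖f (t + τ) + f t‖ ≤ ε}

open Real

noncomputable def sinAddSinMul (θ t : ℝ) : ℝ := sin (π * t) + sin (π * t * θ)

lemma exists_nat_le_ceil_inv_abs_add_mul_sub_int_le_of_pos (x : ℝ) {β : ℝ} (hβ : 0 < β) :
    ∃ k : ℕ, k ≤ ⌈β⁻¹⌉₊ ∧ ∃ m : ℤ, |x + k * β - m| ≤ β := by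
  have hgap₀ : 0 ≤ ⌈x⌉ - x := sub_nonneg.2 (Int.le_ceil x)
  have hgap₁ : ⌈x⌉ - x < 1 := by linarith [Int.ceil_lt_add_one x]
  set k := ⌈(⌈x⌉ - x) / β⌉₊
  have hk₀ : ⌈x⌉ - x ≤ k * β := (div_le_iff₀ hβ).1 (Nat.le_ceil _)
  have hk₁ : k * β < ⌈x⌉ - x + β := by
    have := Nat.ceil_lt_add_one (div_nonneg hgap₀ hβ.le)
    rwa [← lt_div_iff₀ hβ, add_div, div_self hβ.ne']
  refine ⟨k, Nat.ceil_mono ?_, ⌈x⌉, abs_le.2 ⟨by linarith, by linarith⟩⟩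
  rw [inv_eq_one_div]
  exact div_le_div_of_nonneg_right hgap₁.le hβ.le

lemma exists_nat_le_ceil_inv_abs_add_mul_sub_int_le (x : ℝ) {β : ℝ} (hβ : β ≠ 0) :
    ∃ k : ℕ, k ≤ ⌈|β|⁻¹⌉₊ ∧ ∃ m : ℤ, |x + k * β - m| ≤ |β| := by
  rcases hβ.lt_or_gt with hneg | hpos
  · obtain ⟨k, hk, m, hm⟩ :=
      exists_nat_le_ceil_inv_abs_add_mul_sub_int_le_of_pos (-x) (neg_pos.2 hneg)
    refine ⟨k, by rwa [abs_of_neg hneg], -m, ?_⟩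
    rw [abs_of_neg hneg, ← abs_neg]
    convert hm using 2
    push_cast
    ring
  · simpa only [abs_of_pos hpos] using
      exists_nat_le_ceil_inv_abs_add_mul_sub_int_le_of_pos x hpos

lemma Irrational.exists_nat_mul_sub_int_ne_zero_abs_le {θ : ℝ} (hθ : Irrational θ) {η : ℝ}
    (hη : 0 < η) : ∃ q : ℕ, ∃ p : ℤ, q * θ - p ≠ 0 ∧ |q * θ - p| ≤ η := by
  obtain ⟨n, hn⟩ := exists_nat_one_div_lt hη
  obtain ⟨q, hq, -, hqθ⟩ := exists_nat_abs_mul_sub_round_le θ n.succ_pos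
  refine ⟨q, round (q * θ), sub_ne_zero.2 ((hθ.natCast_mul hq.ne').ne_int _), hqθ.trans ?_⟩
  calc 1 / ((n.succ : ℕ) + 1 : ℝ) ≤ 1 / (n + 1) := by gcongr; linarith
    _ ≤ η := hn.le

lemma Irrational.exists_forall_exists_int_abs_mul_add_sub_int_le {θ : ℝ} (hθ : Irrational θ)
    (c : ℝ) {η : ℝ} (hη : 0 < η) :
    ∃ L : ℕ, ∀ j₀ : ℤ, ∃ j : ℤ, j₀ ≤ j ∧ j ≤ j₀ + L ∧ ∃ r : ℤ, |j * θ + c - r| ≤ η := by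
  obtain ⟨q, p, hβ, hβη⟩ := hθ.exists_nat_mul_sub_int_ne_zero_abs_le hη
  refine ⟨⌈|q * θ - p|⁻¹⌉₊ * q, fun j₀ => ?_⟩
  obtain ⟨k, hk, m, hm⟩ := exists_nat_le_ceil_inv_abs_add_mul_sub_int_le (j₀ * θ + c) hβ
  refine ⟨j₀ + k * q, le_add_of_nonneg_right (by positivity), ?_, m + k * p, ?_⟩
  · push_cast
    gcongr
  · calc |((j₀ + k * q : ℤ) : ℝ) * θ + c - ((m + k * p : ℤ) : ℝ)|
        _ = |j₀ * θ + c + k * (q * θ - p) - m| := by push_cast; ring_nf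
        _ ≤ η := hm.trans hβη

lemma Irrational.exists_odd_abs_mul_sub_odd_le {θ : ℝ} (hθ : Irrational θ) {η : ℝ}
    (hη : 0 < η) :
    ∃ l > 0, ∀ a : ℝ, ∃ n : ℤ, Odd n ∧ a ≤ n ∧ n ≤ a + l ∧
      ∃ m : ℤ, Odd m ∧ |n * θ - m| ≤ η := by
  obtain ⟨L, hL⟩ :=
    hθ.exists_forall_exists_int_abs_mul_add_sub_int_le ((θ - 1) / 2) (half_pos hη)
  refine ⟨2 * L + 3, by positivity, fun a => ?_⟩
  obtain ⟨j, hj₀, hjL, r, hr⟩ := hL ⌈a / 2⌉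
  have hceil₀ : a / 2 ≤ ⌈a / 2⌉ := Int.le_ceil _
  have hceil₁ : (⌈a / 2⌉ : ℝ) < a / 2 + 1 := Int.ceil_lt_add_one _
  have hj₀' : (⌈a / 2⌉ : ℝ) ≤ j := mod_cast hj₀
  have hjL' : (j : ℝ) ≤ ⌈a / 2⌉ + L := mod_cast hjL
  refine ⟨2 * j + 1, odd_two_mul_add_one j, by push_cast; linarith, by push_cast; linarith,
    2 * r + 1, odd_two_mul_add_one r, ?_⟩
  calc |((2 * j + 1 : ℤ) : ℝ) * θ - ((2 * r + 1 : ℤ) : ℝ)|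
    _ = |2 * (j * θ + (θ - 1) / 2 - r)| := by push_cast; ring_nf
    _ = 2 * |j * θ + (θ - 1) / 2 - r| := by rw [abs_mul, abs_two]
    _ ≤ η := by linarith

lemma sin_add_odd_mul_pi {n : ℤ} (hn : Odd n) (x : ℝ) : sin (x + n * π) = -sin x := by
  rw [sin_add_int_mul_pi, hn.neg_one_zpow, neg_one_mul]

lemma abs_sinAddSinMul_add_odd_add_le {n m : ℤ} (hn : Odd n) (hm : Odd m) (θ t : ℝ) :
    |sinAddSinMul θ (t + n) + sinAddSinMul θ t| ≤ π * |n * θ - m| := by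
  have h₁ : sin (π * (t + n)) = -sin (π * t) := by
    rw [← sin_add_odd_mul_pi hn]; ring_nf
  have h₂ : sin (π * (t + n) * θ) = -sin (π * t * θ + π * (n * θ - m)) := by
    rw [← sin_add_odd_mul_pi hm]; ring_nf
  calc |sinAddSinMul θ (t + n) + sinAddSinMul θ t|
    _ = |sin (π * t * θ) - sin (π * t * θ + π * (n * θ - m))| := by
      rw [sinAddSinMul, sinAddSinMul, h₁, h₂]; ring_nf
    _ ≤ |π * t * θ - (π * t * θ + π * (n * θ - m))| := abs_sin_sub_sin_le _ _
    _ = π * |n * θ - m| := by rw [sub_add_cancel_left, abs_neg, abs_mul, abs_of_pos pi_pos]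

theorem almostAntiPeriodic_sinAddSinMul {θ : ℝ} (hθ : Irrational θ) :
    AlmostAntiPeriodic (sinAddSinMul θ) := by
  intro ε hε
  obtain ⟨l, hl, hdense⟩ := hθ.exists_odd_abs_mul_sub_odd_le (div_pos hε pi_pos)
  refine ⟨l, hl, fun a ha => ?_⟩
  obtain ⟨n, hn, han, hnl, m, hm, hnm⟩ := hdense a
  have hn_pos : (0 : ℝ) < n :=
    (ha.trans han).lt_of_ne (Int.cast_ne_zero.2 (by rintro rfl; simp at hn)).symm
  refine ⟨n, ⟨hn_pos, fun t => ?_⟩, han, hnl⟩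
  calc ‖sinAddSinMul θ (t + n) + sinAddSinMul θ t‖
    _ ≤ π * |n * θ - m| := abs_sinAddSinMul_add_odd_add_le hn hm θ t
    _ ≤ π * (ε / π) := by gcongr
    _ = ε := mul_div_cancel₀ _ pi_ne_zero

theorem AlmostAntiPeriodic.ofReal {f : ℝ → ℝ} (hf : AlmostAntiPeriodic f) :
    AlmostAntiPeriodic (fun t => (f t : ℂ)) := by
  intro ε hε
  simpa only [← Complex.ofReal_add, Complex.norm_real] using hf ε hε

lemma sinAddSinMul_add_sub (θ t ω : ℝ) :
    sinAddSinMul θ (t + ω) - sinAddSinMul θ t =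
      2 * (sin (π * (ω / 2)) * cos (π * (t + ω / 2)) +
        sin (π * (ω / 2) * θ) * cos (π * (t + ω / 2) * θ)) := by
  rw [sinAddSinMul, sinAddSinMul, add_sub_add_comm, sin_sub_sin, sin_sub_sin]
  ring_nf

lemma eq_zero_of_forall_mul_cos_add_mul_cos_eq_zero {θ A B : ℝ} (hθ : cos (π * θ) ≠ -1)
    (h : ∀ s, A * cos (π * s) + B * cos (π * s * θ) = 0) : A = 0 ∧ B = 0 := by
  have h₀ := h 0
  have h₁ := h 1
  simp only [mul_zero, zero_mul, cos_zero, mul_one, cos_pi] at h₀ h₁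
  have hB : B * (cos (π * θ) + 1) = 0 := by linear_combination h₀ + h₁
  have hB : B = 0 := (mul_eq_zero.1 hB).resolve_right fun h => hθ (by linarith)
  exact ⟨by linarith, hB⟩

lemma Irrational.cos_pi_mul_ne_neg_one {θ : ℝ} (hθ : Irrational θ) : cos (π * θ) ≠ -1 := by
  rw [Ne, cos_eq_neg_one_iff]
  rintro ⟨k, hk⟩
  apply hθ.ne_int (2 * k + 1)
  apply mul_left_cancel₀ pi_ne_zero
  push_cast
  linarith

lemma Irrational.eq_zero_of_sin_pi_mul_eq_zero_of_sin_pi_mul_mul_eq_zero {θ x : ℝ}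
    (hθ : Irrational θ) (hx : sin (π * x) = 0) (hxθ : sin (π * x * θ) = 0) : x = 0 := by
  obtain ⟨n, hn⟩ := sin_eq_zero_iff.1 hx
  obtain ⟨k, hk⟩ := sin_eq_zero_iff.1 hxθ
  have hxn : x = n := mul_left_cancel₀ pi_ne_zero (by linarith)
  subst hxn
  by_contra hn0
  refine (hθ.intCast_mul (Int.cast_ne_zero.1 hn0)).ne_int k (mul_left_cancel₀ pi_ne_zero ?_)
  linarith

theorem not_periodic_sinAddSinMul {θ : ℝ} (hθ : Irrational θ) {ω : ℝ} (hω : ω ≠ 0) :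
    ¬ Function.Periodic (sinAddSinMul θ) ω := by
  intro hper
  have hcos (s : ℝ) :
      sin (π * (ω / 2)) * cos (π * s) + sin (π * (ω / 2) * θ) * cos (π * s * θ) = 0 := by
    have := sinAddSinMul_add_sub θ (s - ω / 2) ω
    rw [hper, sub_self, sub_add_cancel] at this
    linarith
  obtain ⟨h₁, h₂⟩ :=
    eq_zero_of_forall_mul_cos_add_mul_cos_eq_zero hθ.cos_pi_mul_ne_neg_one hcos
  exact hω (by linarith [hθ.eq_zero_of_sin_pi_mul_eq_zero_of_sin_pi_mul_mul_eq_zero h₁ h₂])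

/-- The function `t ↦ sin (π t) + sin (π t √2)` is almost anti-periodic but not periodic. -/
theorem sin_add_sin_sqrt_two_almostAntiPeriodic_not_periodic :
    AlmostAntiPeriodic (fun t : ℝ =>
      ((Real.sin (Real.pi * t) + Real.sin (Real.pi * t * Real.sqrt 2) : ℝ) : ℂ)) ∧
    ¬ ∃ ω : ℝ, 0 < ω ∧ ∀ t : ℝ,
      ((Real.sin (Real.pi * (t + ω)) + Real.sin (Real.pi * (t + ω) * Real.sqrt 2) : ℝ) : ℂ) =
      ((Real.sin (Real.pi * t) + Real.sin (Real.pi * t * Real.sqrt 2) : ℝ) : ℂ) := by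
  refine ⟨(almostAntiPeriodic_sinAddSinMul irrational_sqrt_two).ofReal, ?_⟩
  rintro ⟨ω, hω, hper⟩
  exact not_periodic_sinAddSinMul irrational_sqrt_two hω.ne' fun t => mod_cast hper t
end

section
/- Let f : ℝ → ℂ be almost anti-periodic and suppose that inf_{x∈ℝ} |f(x)| = m > 0. Then the function t ↦ 1/f(t) is almost anti-periodic. -/
/-- If `f : ℝ → ℂ` is almost anti-periodic and `inf_{x ∈ ℝ} |f x| = m > 0`,
then `1 / f` is almost anti-periodic. -/
theorem inv_almostAntiPeriodic
    (f : ℝ → ℂ) (hf : Continuous f) (h : AlmostAntiPeriodic f)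
    (m : ℝ) (hm : 0 < m) (hinf : IsGLB (Set.range fun x : ℝ => ‖f x‖) m) :
    AlmostAntiPeriodic (fun t => (f t)⁻¹) := by
  intro ε hε
  have hmle : ∀ x : ℝ, m ≤ ‖f x‖ := fun x => hinf.1 ⟨x, rfl⟩
  have hne : ∀ x : ℝ, f x ≠ 0 := by
    intro x hx
    have := hmle x
    rw [hx] at this
    simp at this
    linarith
  obtain ⟨l, hl, hτ⟩ := h (ε * m ^ 2) (by positivity)
  refine ⟨l, hl, fun a ha => ?_⟩
  obtain ⟨τ, ⟨hτ0, hτε⟩, h1, h2⟩ := hτ a ha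
  refine ⟨τ, ⟨hτ0, fun t => ?_⟩, h1, h2⟩
  have hnorm : ‖(f (t + τ))⁻¹ + (f t)⁻¹‖
      = ‖f (t + τ) + f t‖ / (‖f (t + τ)‖ * ‖f t‖) := by
    rw [inv_add_inv (hne _) (hne _)]
    rw [norm_div, norm_mul]
  rw [hnorm]
  rw [div_le_iff₀ (mul_pos (hm.trans_le (hmle _)) (hm.trans_le (hmle _)))]
  calc ‖f (t + τ) + f t‖ ≤ ε * m ^ 2 := hτε t
    _ ≤ ε * (‖f (t + τ)‖ * ‖f t‖) := by
        have := hmle (t + τ); have := hmle t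
        have : m ^ 2 ≤ ‖f (t + τ)‖ * ‖f t‖ := by
          rw [sq]; exact mul_le_mul (hmle _) (hmle _) hm.le (norm_nonneg _)
        nlinarith
    _ = ε * (‖f (t + τ)‖ * ‖f t‖) := rfl
end

section
/- Let I = ℝ or I = [0,∞), let X be a complex Banach space, let (gₙ : I → X)ₙ∈ℕ be a sequence of almost anti-periodic functions, and suppose that (gₙ) converges uniformly on I to a function g : I → X. Then g is almost anti-periodic. -/
theorem RelativelyDense.mono {S T : Set ℝ} (hST : S ⊆ T) (hS : RelativelyDense S) :
    RelativelyDense T := by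
  obtain ⟨l, hl, hdense⟩ := hS
  exact ⟨l, hl, fun a ha => (hdense a ha).imp fun _ ⟨hτ, hle⟩ => ⟨hST hτ, hle⟩⟩

theorem add_mem_of_eq_univ_or_eq_Ici {I : Set ℝ} (hI : I = Set.univ ∨ I = Set.Ici 0)
    {t τ : ℝ} (ht : t ∈ I) (hτ : 0 ≤ τ) : t + τ ∈ I := by
  rcases hI with rfl | rfl
  · trivial
  · exact Set.mem_Ici.mpr (add_nonneg ht hτ)

theorem AlmostAntiPeriodicOn.of_forall_dist_le {X : Type*} [NormedAddCommGroup X] {I : Set ℝ}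
    (hI : ∀ t ∈ I, ∀ τ, 0 < τ → t + τ ∈ I) {f : ℝ → X}
    (happrox : ∀ δ > 0, ∃ g, AlmostAntiPeriodicOn I g ∧ ∀ t ∈ I, dist (f t) (g t) ≤ δ) :
    AlmostAntiPeriodicOn I f := by
  intro ε hε
  obtain ⟨g, hg, hfg⟩ := happrox (ε / 3) (by positivity)
  refine (hg (ε / 3) (by positivity)).mono ?_
  rintro τ ⟨hτ, hgτ⟩
  refine ⟨hτ, fun t ht => ?_⟩
  calc ‖f (t + τ) + f t‖
      ≤ ‖g (t + τ) + g t‖ + dist (f (t + τ) + f t) (g (t + τ) + g t) := by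
        rw [dist_eq_norm]; exact norm_le_norm_add_norm_sub' _ _
    _ ≤ ‖g (t + τ) + g t‖ + (dist (f (t + τ)) (g (t + τ)) + dist (f t) (g t)) := by
        gcongr; exact dist_add_add_le _ _ _ _
    _ ≤ ε / 3 + (ε / 3 + ε / 3) := by
        gcongr
        exacts [hgτ t ht, hfg _ (hI t ht τ hτ), hfg t ht]
    _ = ε := by ring

theorem uniform_limit_almostAntiPeriodic_general
    {X : Type*} [NormedAddCommGroup X]
    (I : Set ℝ) (hI : I = Set.univ ∨ I = Set.Ici (0 : ℝ))
    (g : ℕ → ℝ → X)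
    (hg : ∀ n, AlmostAntiPeriodicOn I (g n))
    (G : ℝ → X) (hlim : TendstoUniformlyOn g G Filter.atTop I) :
    AlmostAntiPeriodicOn I G := by
  refine .of_forall_dist_le (fun t ht τ hτ => add_mem_of_eq_univ_or_eq_Ici hI ht hτ.le)
    fun δ hδ => ?_
  obtain ⟨n, hn⟩ := (Metric.tendstoUniformlyOn_iff.mp hlim δ hδ).exists
  exact ⟨g n, hg n, fun t ht => (hn t ht).le⟩

/-- A uniform limit of almost anti-periodic functions is almost anti-periodic. -/
theorem uniform_limit_almostAntiPeriodic
    {X : Type*} [NormedAddCommGroup X] [NormedSpace ℂ X] [CompleteSpace X]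
    (I : Set ℝ) (hI : I = Set.univ ∨ I = Set.Ici (0 : ℝ))
    (g : ℕ → ℝ → X) (hcont : ∀ n, ContinuousOn (g n) I)
    (hg : ∀ n, AlmostAntiPeriodicOn I (g n))
    (G : ℝ → X) (hlim : TendstoUniformlyOn g G Filter.atTop I) :
    AlmostAntiPeriodicOn I G :=
  uniform_limit_almostAntiPeriodic_general I hI g hg G hlim
end

section
/- The function h : ℝ → ℝ, h(t) = cos²(t), satisfies h(t+τ) + h(t) ≥ cos²(t) for all τ, t ∈ ℝ; consequently, for every ε ∈ (0,1) the function h has no ε-antiperiod, and hence h is not almost anti-periodic, although h is the product of the two (almost) anti-periodic functions f₁(t) = f₂(t) = cos(t). -/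
/-- `h t = cos² t` satisfies `h (t+τ) + h t ≥ cos² t`, has no `ε`-antiperiod for
`ε ∈ (0,1)`, hence is not almost anti-periodic, although it is the product of the two
(almost) anti-periodic functions `f₁ = f₂ = cos`. -/
theorem cos_sq_not_almostAntiPeriodic :
    (∀ τ t : ℝ, Real.cos t ^ 2 ≤ Real.cos (t + τ) ^ 2 + Real.cos t ^ 2) ∧
    (∀ ε : ℝ, 0 < ε → ε < 1 →
      ¬ ∃ τ : ℝ, 0 < τ ∧ ∀ t : ℝ, |Real.cos (t + τ) ^ 2 + Real.cos t ^ 2| ≤ ε) ∧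
    ¬ AlmostAntiPeriodic (fun t : ℝ => Real.cos t ^ 2) ∧
    (∀ t : ℝ, Real.cos t ^ 2 = Real.cos t * Real.cos t) ∧
    (∃ ω : ℝ, 0 < ω ∧ ∀ t : ℝ, Real.cos (t + ω) = -Real.cos t) := by
  refine ⟨fun τ t => le_add_of_nonneg_left (sq_nonneg _), ?_, ?_, fun t => sq t.cos, ⟨Real.pi, Real.pi_pos, fun t => by rw [Real.cos_add_pi]⟩⟩
  · rintro ε hε hε1 ⟨τ, hτ, h⟩
    have := h 0
    simp only [zero_add, Real.cos_zero, one_pow] at this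
    have h1 : (1 : ℝ) ≤ Real.cos τ ^ 2 + 1 := le_add_of_nonneg_left (sq_nonneg _)
    have h2 : Real.cos τ ^ 2 + 1 ≤ ε := le_trans (le_abs_self _) this
    linarith
  · intro hA
    obtain ⟨l, hl, hS⟩ := hA (1/2) (by norm_num)
    obtain ⟨τ, ⟨hτ, hτ2⟩, -⟩ := hS 0 le_rfl
    have := hτ2 0
    simp only [zero_add, Real.cos_zero, one_pow, Real.norm_eq_abs] at this
    have h1 : (1 : ℝ) ≤ Real.cos τ ^ 2 + 1 := le_add_of_nonneg_left (sq_nonneg _)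
    have h2 : Real.cos τ ^ 2 + 1 ≤ 1/2 := le_trans (le_abs_self _) this
    linarith
end

section
/- The function h : ℝ → ℝ defined by h(t) = (1/2)cos(4t) + 2cos(2t) satisfies h(t) = 4cos⁴(t) − 3/2 for all t ∈ ℝ and is not almost anti-periodic: for every ε ∈ (0,1) and every τ ∈ ℝ one has |8cos⁴(π+τ) + 8cos⁴(π) − 6| = 8cos⁴(τ) + 2 > ε, so h has no ε-antiperiod. Hence the sum of the two anti-periodic functions f₁(t) = (1/2)cos(4t) and f₂(t) = 2cos(2t) need not be almost anti-periodic. -/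
lemma h_eq (t : ℝ) : (1 / 2) * Real.cos (4 * t) + 2 * Real.cos (2 * t)
    = 4 * Real.cos t ^ 4 - 3 / 2 := by
  have h4 : (4 : ℝ) * t = 2 * (2 * t) := by ring
  rw [h4, Real.cos_two_mul, Real.cos_two_mul]
  ring

lemma key (τ : ℝ) :
    |((1 / 2) * Real.cos (4 * (Real.pi + τ)) + 2 * Real.cos (2 * (Real.pi + τ)))
      + ((1 / 2) * Real.cos (4 * Real.pi) + 2 * Real.cos (2 * Real.pi))|
      = 4 * Real.cos τ ^ 4 + 1 := by
  have hc : Real.cos (Real.pi + τ) = -Real.cos τ := by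
    rw [Real.cos_add]; simp
  rw [h_eq, h_eq, hc, Real.cos_pi]
  have : (4:ℝ) * (-Real.cos τ) ^ 4 - 3 / 2 + (4 * (-1:ℝ) ^ 4 - 3 / 2)
      = 4 * Real.cos τ ^ 4 + 1 := by ring
  rw [this]
  exact abs_of_nonneg (by positivity)

/-- The sum `h t = (1/2) cos (4t) + 2 cos (2t)` of two anti-periodic functions equals
`4 cos⁴ t - 3/2`, satisfies `|8 cos⁴(π+τ) + 8 cos⁴ π - 6| = 8 cos⁴ τ + 2 > ε` for every
`τ ∈ ℝ` and `ε ∈ (0,1)`, has no `ε`-antiperiod for `ε ∈ (0,1)`, and hence is not almost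
anti-periodic, although `f₁ t = (1/2) cos (4t)` and `f₂ t = 2 cos (2t)` are anti-periodic. -/
theorem sum_of_antiPeriodic_not_almostAntiPeriodic :
    (∀ t : ℝ, (1 / 2) * Real.cos (4 * t) + 2 * Real.cos (2 * t)
        = 4 * Real.cos t ^ 4 - 3 / 2) ∧
    (∀ ε τ : ℝ, 0 < ε → ε < 1 →
      |8 * Real.cos (Real.pi + τ) ^ 4 + 8 * Real.cos Real.pi ^ 4 - 6|
          = 8 * Real.cos τ ^ 4 + 2 ∧
      ε < 8 * Real.cos τ ^ 4 + 2) ∧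
    (∀ ε : ℝ, 0 < ε → ε < 1 →
      ¬ ∃ τ : ℝ, 0 < τ ∧ ∀ t : ℝ,
        |((1 / 2) * Real.cos (4 * (t + τ)) + 2 * Real.cos (2 * (t + τ)))
          + ((1 / 2) * Real.cos (4 * t) + 2 * Real.cos (2 * t))| ≤ ε) ∧
    ¬ AlmostAntiPeriodic (fun t : ℝ => (1 / 2) * Real.cos (4 * t) + 2 * Real.cos (2 * t)) ∧
    (∃ ω : ℝ, 0 < ω ∧ ∀ t : ℝ,
      (1 / 2) * Real.cos (4 * (t + ω)) = -((1 / 2) * Real.cos (4 * t))) ∧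
    (∃ ω : ℝ, 0 < ω ∧ ∀ t : ℝ, 2 * Real.cos (2 * (t + ω)) = -(2 * Real.cos (2 * t))) := by
  have notanti : ∀ ε : ℝ, 0 < ε → ε < 1 →
      ¬ ∃ τ : ℝ, 0 < τ ∧ ∀ t : ℝ,
        |((1 / 2) * Real.cos (4 * (t + τ)) + 2 * Real.cos (2 * (t + τ)))
          + ((1 / 2) * Real.cos (4 * t) + 2 * Real.cos (2 * t))| ≤ ε := by
    intro ε hε hε1 ⟨τ, hτ, h⟩
    have := h Real.pi
    rw [key τ] at this
    nlinarith [sq_nonneg (Real.cos τ ^ 2)]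
  refine ⟨h_eq, ?_, notanti, ?_, ?_, ?_⟩
  · intro ε τ hε hε1
    have hc : Real.cos (Real.pi + τ) = -Real.cos τ := by
      rw [Real.cos_add]; simp
    rw [hc, Real.cos_pi]
    constructor
    · have : (8:ℝ) * (-Real.cos τ) ^ 4 + 8 * (-1:ℝ) ^ 4 - 6 = 8 * Real.cos τ ^ 4 + 2 := by
        ring
      rw [this]; exact abs_of_nonneg (by positivity)
    · nlinarith [sq_nonneg (Real.cos τ ^ 2)]
  · intro hA
    obtain ⟨l, hl, hd⟩ := hA (1/2) (by norm_num)
    obtain ⟨τ, ⟨hτ, ht⟩, _, _⟩ := hd 0 le_rfl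
    exact notanti (1/2) (by norm_num) (by norm_num) ⟨τ, hτ, fun t => by
      simpa [Real.norm_eq_abs] using ht t⟩
  · exact ⟨Real.pi / 4, by positivity, fun t => by
      have : (4:ℝ) * (t + Real.pi / 4) = 4 * t + Real.pi := by ring
      rw [this, Real.cos_add_pi]; ring⟩
  · exact ⟨Real.pi / 2, by positivity, fun t => by
      have : (2:ℝ) * (t + Real.pi / 2) = 2 * t + Real.pi := by ring
      rw [this, Real.cos_add_pi]; ring⟩
end

section
/- Let X be a complex Banach space and let f : ℝ → X be continuous and almost anti-periodic, and suppose the Bohr mean P₀(f) = lim_{t→∞} (1/t)∫₀ᵗ f(s) ds exists in X. Then P₀(f) = 0. In particular, for every ε > 0, if ω > 0 is an ε-antiperiod of f, then ‖∫₀^{2ω} f(s) ds‖ ≤ εω. -/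
open Filter intervalIntegral

/-- The Bohr mean `P₀(f) = lim_{t→∞} (1/t) ∫₀ᵗ f(s) ds` of an almost anti-periodic
function vanishes; in particular `‖∫₀^{2ω} f‖ ≤ ε ω` whenever `ω > 0` is an
`ε`-antiperiod of `f`. -/
theorem bohr_mean_of_almostAntiPeriodic_eq_zero
    {X : Type*} [NormedAddCommGroup X] [NormedSpace ℂ X] [CompleteSpace X]
    (f : ℝ → X) (hf : Continuous f) (h : AlmostAntiPeriodic f)
    (P : X)
    (hP : Tendsto (fun t : ℝ => t⁻¹ • ∫ s in (0 : ℝ)..t, f s) atTop (nhds P)) :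
    P = 0 ∧
    ∀ ε > 0, ∀ ω : ℝ, 0 < ω → (∀ t : ℝ, ‖f (t + ω) + f t‖ ≤ ε) →
      ‖∫ s in (0 : ℝ)..(2 * ω), f s‖ ≤ ε * ω := by
  have hint : ∀ a b : ℝ, IntervalIntegrable f MeasureTheory.volume a b :=
    fun a b => hf.intervalIntegrable a b
  have key : ∀ ε > 0, ∀ ω : ℝ, 0 < ω → (∀ t : ℝ, ‖f (t + ω) + f t‖ ≤ ε) →
      ‖∫ s in (0 : ℝ)..(2 * ω), f s‖ ≤ ε * ω := by
    intro ε hε ω hω hap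
    have h1 : (∫ s in (0:ℝ)..(2*ω), f s) =
        (∫ s in (0:ℝ)..ω, f s) + ∫ s in ω..(2*ω), f s :=
      (integral_add_adjacent_intervals (hint 0 ω) (hint ω (2*ω))).symm
    have h2 : (∫ s in ω..(2*ω), f s) = ∫ s in (0:ℝ)..ω, f (s + ω) := by
      rw [intervalIntegral.integral_comp_add_right f ω]
      norm_num [two_mul]
    have hint2 : IntervalIntegrable (fun s => f (s + ω)) MeasureTheory.volume 0 ω :=
      (hf.comp (continuous_id.add continuous_const)).intervalIntegrable 0 ω
    have h3 : (∫ s in (0:ℝ)..(2*ω), f s) = ∫ s in (0:ℝ)..ω, (f (s + ω) + f s) := by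
      rw [h1, h2, intervalIntegral.integral_add hint2 (hint 0 ω), add_comm]
    rw [h3]
    have := intervalIntegral.norm_integral_le_of_norm_le_const
      (C := ε) (f := fun s => f (s + ω) + f s) (a := (0:ℝ)) (b := ω)
      (fun x _ => hap x)
    calc ‖∫ s in (0:ℝ)..ω, (f (s + ω) + f s)‖ ≤ ε * |ω - 0| := this
      _ = ε * ω := by rw [sub_zero, abs_of_pos hω]
  refine ⟨?_, key⟩
  -- P = 0
  have hnorm : ∀ ε > (0:ℝ), ‖P‖ ≤ ε := by
    intro ε hε
    obtain ⟨l, hl, hτ⟩ := h ε hε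
    -- choose τ n ∈ [n, n+l] an ε-antiperiod
    choose τ hτS hτge hτle using fun n : ℕ => hτ n (Nat.cast_nonneg n)
    have hτpos : ∀ n, 0 < τ n := fun n => (hτS n).1
    have hτap : ∀ n, ∀ t : ℝ, ‖f (t + τ n) + f t‖ ≤ ε := fun n => (hτS n).2
    have htend : Tendsto (fun n : ℕ => 2 * τ n) atTop atTop := by
      apply tendsto_atTop_mono (fun n => ?_) (tendsto_natCast_atTop_atTop (R := ℝ))
      have := hτge n
      linarith
    have hcomp : Tendsto (fun n : ℕ => (2 * τ n)⁻¹ • ∫ s in (0:ℝ)..(2 * τ n), f s)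
        atTop (nhds P) := hP.comp htend
    have hbound : ∀ n : ℕ, ‖(2 * τ n)⁻¹ • ∫ s in (0:ℝ)..(2 * τ n), f s‖ ≤ ε / 2 := by
      intro n
      rw [norm_smul, norm_inv, Real.norm_eq_abs, abs_of_pos (by linarith [hτpos n])]
      rw [div_eq_mul_inv, mul_comm ε]
      calc (2 * τ n)⁻¹ * ‖∫ s in (0:ℝ)..(2 * τ n), f s‖
          ≤ (2 * τ n)⁻¹ * (ε * τ n) := by
            apply mul_le_mul_of_nonneg_left (key ε hε (τ n) (hτpos n) (hτap n))
            exact inv_nonneg.mpr (by linarith [hτpos n])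
        _ = 2⁻¹ * ε := by
            have hne : τ n ≠ 0 := ne_of_gt (hτpos n)
            field_simp
    have hlim : Tendsto (fun n : ℕ => ‖(2 * τ n)⁻¹ • ∫ s in (0:ℝ)..(2 * τ n), f s‖)
        atTop (nhds ‖P‖) := hcomp.norm
    have : ‖P‖ ≤ ε / 2 := le_of_tendsto hlim (Eventually.of_forall hbound)
    linarith
  have : ‖P‖ ≤ 0 := le_of_forall_pos_le_add (by intro ε hε; simpa using hnorm ε hε)
  simpa using le_antisymm this (norm_nonneg P)
end

section
/- Let X be a complex Banach space, let 1 ≤ p < ∞, and let f : ℝ → X be almost anti-periodic. Then f is Stepanov p-almost anti-periodic, i.e., the function f̂ : ℝ → L^p([0,1] : X) defined by f̂(t)(s) = f(t+s) for t ∈ ℝ, s ∈ [0,1], is almost anti-periodic. -/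
open MeasureTheory
open scoped ENNReal

/-- `g : ℝ → X` is Stepanov `p`-almost anti-periodic: the function
`ĝ : ℝ → L^p([0,1] : X)`, `ĝ(t)(s) = g (t+s)`, is almost anti-periodic; i.e. for each
`ε > 0` the set of `τ > 0` with `‖ĝ(t+τ) + ĝ(t)‖_{L^p([0,1]:X)} ≤ ε` for all `t ∈ ℝ`
is relatively dense. -/
def StepanovAlmostAntiPeriodic {X : Type*} [NormedAddCommGroup X]
    (p : ℝ≥0∞) (g : ℝ → X) : Prop :=
  ∀ ε > 0, RelativelyDense {τ : ℝ | 0 < τ ∧ ∀ t : ℝ,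
    eLpNorm (fun s => g (t + τ + s) + g (t + s)) p
        (MeasureTheory.volume.restrict (Set.Icc (0 : ℝ) 1))
      ≤ ENNReal.ofReal ε}

/-- Every almost anti-periodic function is Stepanov `p`-almost anti-periodic,
`1 ≤ p < ∞`. -/
theorem almostAntiPeriodic_stepanovAlmostAntiPeriodic
    {X : Type*} [NormedAddCommGroup X] [NormedSpace ℂ X] [CompleteSpace X]
    (p : ℝ≥0∞) (hp1 : 1 ≤ p) (hp2 : p ≠ ⊤)
    (f : ℝ → X) (hf : Continuous f) (h : AlmostAntiPeriodic f) :
    StepanovAlmostAntiPeriodic p f := by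
  intro ε hε
  obtain ⟨l, hl, hτ⟩ := h ε hε
  refine ⟨l, hl, fun a ha => ?_⟩
  obtain ⟨τ, ⟨hτpos, hτb⟩, h1, h2⟩ := hτ a ha
  refine ⟨τ, ⟨hτpos, fun t => ?_⟩, h1, h2⟩
  calc eLpNorm (fun s => f (t + τ + s) + f (t + s)) p
        (MeasureTheory.volume.restrict (Set.Icc (0 : ℝ) 1))
      ≤ (MeasureTheory.volume.restrict (Set.Icc (0 : ℝ) 1)) Set.univ ^ p.toReal⁻¹ *
          ENNReal.ofReal ε := by
        refine eLpNorm_le_of_ae_bound (ae_of_all _ fun s => ?_)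
        have := hτb (t + s)
        calc ‖f (t + τ + s) + f (t + s)‖ = ‖f (t + s + τ) + f (t + s)‖ := by ring_nf
          _ ≤ ε := this
    _ = ENNReal.ofReal ε := by
        rw [Measure.restrict_apply_univ, Real.volume_Icc]
        norm_num
end
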